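/- arXiv:2603.25177 — 7 statements merged into one kernel-verified Lean document; each statement's English description precedes it below -/
import Mathlib

section
/- Let f : ℝ → ℝ be continuously differentiable, let g : ℝ → ℝ be continuous, and let x₀ ∈ ℝ be such that f'(g(x₀)) > 0. Then the upper right Dini derivative of f ∘ g at x₀ satisfies (D⁺(f∘g))(x₀) = f'(g(x₀)) · (D⁺g)(x₀), as an equality in the extended real numbers [−∞, +∞]. -/
open Filter Topology

/-- Upper right Dini derivative, with values in the extended reals. -/
noncomputable def DiniUpper (u : ℝ → ℝ) (x : ℝ) : EReal :=
  Filter.limsup (fun h : ℝ => (((u (x + h) - u x) / h : ℝ) : EReal)) (nhdsWithin 0 (Set.Ioi 0))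

/-- Lower right Dini derivative, with values in the extended reals. -/
noncomputable def DiniLower (u : ℝ → ℝ) (x : ℝ) : EReal :=
  Filter.liminf (fun h : ℝ => (((u (x + h) - u x) / h : ℝ) : EReal)) (nhdsWithin 0 (Set.Ioi 0))

/-!
Writing `f (g (x₀ + h)) - f (g x₀) = dslope f (g x₀) (g (x₀ + h)) * (g (x₀ + h) - g x₀)`, the
difference quotient of `f ∘ g` is that of `g` times a factor tending to `f' (g x₀) > 0`. Along any
filter, multiplying a real sequence by factors tending to `c > 0` multiplies its `EReal` limsup
by `c`: for `r i ∈ [c - s, c + s]` the product lies below `max ((c - s) * u i) ((c + s) * u i)`,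
and one lets `s → 0`, `EReal` multiplication being continuous at `(c, L)` for `c ≠ 0`.
-/

lemma mul_le_max_mul_of_mem_Icc {a b r : ℝ} (hr : r ∈ Set.Icc a b) (y : ℝ) :
    r * y ≤ max (a * y) (b * y) := by
  rcases le_total 0 y with hy | hy
  · exact (mul_le_mul_of_nonneg_right hr.2 hy).trans (le_max_right _ _)
  · exact (mul_le_mul_of_nonpos_right hr.1 hy).trans (le_max_left _ _)

namespace EReal

lemma tendsto_max_coe_sub_mul_coe_add_mul {c : ℝ} (hc : c ≠ 0) (L : EReal) :
    Tendsto (fun s : ℝ => max (((c - s : ℝ) : EReal) * L) (((c + s : ℝ) : EReal) * L))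
      (𝓝 0) (𝓝 ((c : EReal) * L)) := by
  have hmul : ContinuousAt (fun x : EReal => x * L) c :=
    (EReal.continuousAt_mul (p := ((c : EReal), L)) (by simp [hc]) (by simp [hc]) (by simp)
      (by simp)).comp (f := fun x : EReal => (x, L)) (by fun_prop)
  have hcoe : Tendsto (fun x : ℝ => (x : EReal) * L) (𝓝 c) (𝓝 ((c : EReal) * L)) :=
    hmul.tendsto.comp (continuous_coe_real_ereal.tendsto c)
  simpa only [max_self, Function.comp_def] using
    (hcoe.comp ((continuous_sub_left c).tendsto' 0 c (sub_zero c))).max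
      (hcoe.comp ((continuous_const_add c).tendsto' 0 c (add_zero c)))

variable {α : Type*} {l : Filter α} [NeBot l] {r u : α → ℝ} {c : ℝ}

lemma limsup_coe_mul_le_of_tendsto (hc : 0 < c) (hr : Tendsto r l (𝓝 c)) :
    limsup (fun i => ((r i * u i : ℝ) : EReal)) l ≤ c * limsup (fun i => (u i : EReal)) l := by
  set L := limsup (fun i => (u i : EReal)) l
  have bound : ∀ s ∈ Set.Ioo 0 c, limsup (fun i => ((r i * u i : ℝ) : EReal)) l ≤
      max (((c - s : ℝ) : EReal) * L) (((c + s : ℝ) : EReal) * L) := by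
    rintro s ⟨hs, hsc⟩
    have hpt : ∀ᶠ i in l, ((r i * u i : ℝ) : EReal) ≤
        max (((c - s : ℝ) : EReal) * u i) (((c + s : ℝ) : EReal) * u i) := by
      filter_upwards [hr (Icc_mem_nhds (by linarith : c - s < c) (by linarith : c < c + s))]
        with i hi
      simpa only [← EReal.coe_mul, le_max_iff, EReal.coe_le_coe_iff]
        using mul_le_max_mul_of_mem_Icc hi (u i)
    refine (limsup_le_limsup hpt).trans_eq ?_
    have hs_sub : (0 : EReal) ≤ ((c - s : ℝ) : EReal) := by exact_mod_cast (by linarith)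
    have hs_add : (0 : EReal) ≤ ((c + s : ℝ) : EReal) := by exact_mod_cast (by linarith)
    rw [limsup_max, limsup_const_mul_of_nonneg_of_ne_top hs_sub (coe_ne_top _),
      limsup_const_mul_of_nonneg_of_ne_top hs_add (coe_ne_top _)]
  exact ge_of_tendsto ((tendsto_max_coe_sub_mul_coe_add_mul hc.ne' L).mono_left
    nhdsWithin_le_nhds) (eventually_of_mem (Ioo_mem_nhdsGT hc) bound)

lemma limsup_coe_mul_of_tendsto (hc : 0 < c) (hr : Tendsto r l (𝓝 c)) :
    limsup (fun i => ((r i * u i : ℝ) : EReal)) l = c * limsup (fun i => (u i : EReal)) l := by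
  refine le_antisymm (limsup_coe_mul_le_of_tendsto hc hr) ?_
  have hinv := limsup_coe_mul_le_of_tendsto (u := fun i => r i * u i) (inv_pos.2 hc)
    (hr.inv₀ hc.ne')
  have hcancel :
      (fun i => (((r i)⁻¹ * (r i * u i) : ℝ) : EReal)) =ᶠ[l] fun i => (u i : EReal) := by
    filter_upwards [hr.eventually_ne hc.ne'] with i hi
    rw [inv_mul_cancel_left₀ hi]
  rw [limsup_congr hcancel] at hinv
  calc (c : EReal) * limsup (fun i => (u i : EReal)) l
      ≤ c * (((c⁻¹ : ℝ) : EReal) * limsup (fun i => ((r i * u i : ℝ) : EReal)) l) :=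
        mul_le_mul_of_nonneg_left hinv (by exact_mod_cast hc.le)
    _ = limsup (fun i => ((r i * u i : ℝ) : EReal)) l := by
        rw [← mul_assoc, ← coe_mul, mul_inv_cancel₀ hc.ne', coe_one, one_mul]

end EReal

theorem diniUpper_comp_of_deriv_pos_general (f g : ℝ → ℝ) (x₀ : ℝ)
    (hg : Continuous g) (hpos : 0 < deriv f (g x₀)) :
    DiniUpper (f ∘ g) x₀ = ((deriv f (g x₀) : ℝ) : EReal) * DiniUpper g x₀ := by
  have hg_right : Tendsto (fun h => g (x₀ + h)) (𝓝[>] 0) (𝓝 (g x₀)) :=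
    ((hg.comp (continuous_const_add x₀)).tendsto' 0 _ (by simp)).mono_left nhdsWithin_le_nhds
  have hslope :
      Tendsto (fun h => dslope f (g x₀) (g (x₀ + h))) (𝓝[>] 0) (𝓝 (deriv f (g x₀))) := by
    rw [← dslope_same]
    exact (continuousAt_dslope_same.2 (differentiableAt_of_deriv_ne_zero hpos.ne')).tendsto.comp
      hg_right
  have hquot (h : ℝ) : ((f ∘ g) (x₀ + h) - (f ∘ g) x₀) / h =
      dslope f (g x₀) (g (x₀ + h)) * ((g (x₀ + h) - g x₀) / h) := by
    rw [Function.comp_apply, Function.comp_apply, ← sub_smul_dslope f (g x₀), smul_eq_mul,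
      mul_comm, mul_div_assoc]
  simp only [DiniUpper, hquot]
  exact EReal.limsup_coe_mul_of_tendsto hpos hslope

/-- If `f` is continuously differentiable, `g` is continuous and `f'(g x₀) > 0`, then
`D⁺(f ∘ g)(x₀) = f'(g x₀) · D⁺g(x₀)` in the extended reals. -/
theorem diniUpper_comp_of_deriv_pos (f g : ℝ → ℝ) (x₀ : ℝ)
    (hf : ContDiff ℝ 1 f) (hg : Continuous g) (hpos : 0 < deriv f (g x₀)) :
    DiniUpper (f ∘ g) x₀ = ((deriv f (g x₀) : ℝ) : EReal) * DiniUpper g x₀ :=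
  diniUpper_comp_of_deriv_pos_general f g x₀ hg hpos
end

section
/- Let f : ℝ → ℝ be continuously differentiable, let g : ℝ → ℝ be continuous, and let x₀ ∈ ℝ be such that f'(g(x₀)) < 0. Then the upper right Dini derivative of f ∘ g at x₀ satisfies (D⁺(f∘g))(x₀) = f'(g(x₀)) · (D₊g)(x₀), as an equality in the extended real numbers [−∞, +∞]. -/
/-!
Write `a = g x₀`. The difference quotient of `f ∘ g` factors exactly as
`dslope f a (g (x₀ + h)) * (g (x₀ + h) - a) / h`, also where `g (x₀ + h) = a`, and the first
factor tends to `f' a` because `f` is differentiable at `a` and `g` is continuous. Inside a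
`limsup`, a real factor tending to a nonzero constant `c` may be replaced by `c`, and multiplying
by `c < 0` turns the `limsup` into `c` times a `liminf`.
-/

open Filter Topology

namespace EReal

variable {α : Type*} {l : Filter α}

lemma limsup_coe_mul_le_of_tendsto_one {ψ s : α → ℝ} (hψ : Tendsto ψ l (𝓝 1)) :
    limsup (fun x => ((ψ x * s x : ℝ) : EReal)) l ≤ limsup (fun x => (s x : EReal)) l := by
  refine (limsup_le_iff).2 fun y hy => ?_
  obtain ⟨z, hsz, hzy⟩ := exists_between_coe_real hy
  have hψz : Tendsto (fun x => ((ψ x * z : ℝ) : EReal)) l (𝓝 (z : EReal)) :=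
    continuous_coe_real_ereal.continuousAt.tendsto.comp (by simpa using hψ.mul_const z)
  filter_upwards [eventually_lt_of_limsup_lt hsz, hψz.eventually (gt_mem_nhds hzy),
    hψ.eventually (lt_mem_nhds zero_lt_one)] with x hsx hψzy hψpos
  calc ((ψ x * s x : ℝ) : EReal) ≤ ((ψ x * z : ℝ) : EReal) :=
        EReal.coe_le_coe_iff.2 (mul_le_mul_of_nonneg_left (EReal.coe_lt_coe_iff.1 hsx).le hψpos.le)
    _ < y := hψzy

lemma limsup_coe_mul_eq_of_tendsto {φ q : α → ℝ} {c : ℝ} (hc : c ≠ 0)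
    (hφ : Tendsto φ l (𝓝 c)) :
    limsup (fun x => ((φ x * q x : ℝ) : EReal)) l =
      limsup (fun x => ((c * q x : ℝ) : EReal)) l := by
  apply le_antisymm
  · calc limsup (fun x => ((φ x * q x : ℝ) : EReal)) l
          = limsup (fun x => ((φ x / c * (c * q x) : ℝ) : EReal)) l := by
            congr! 3 with x; field_simp
      _ ≤ _ := limsup_coe_mul_le_of_tendsto_one (by simpa [hc] using hφ.div_const c)
  · calc limsup (fun x => ((c * q x : ℝ) : EReal)) l
          = limsup (fun x => ((c / φ x * (φ x * q x) : ℝ) : EReal)) l := by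
            refine limsup_congr ((hφ.eventually_ne hc).mono fun x hx => ?_)
            congr 1; field_simp
      _ ≤ _ := by
            have hcφ : Tendsto (fun x => c / φ x) l (𝓝 (c / c)) := tendsto_const_nhds.div hφ hc
            exact limsup_coe_mul_le_of_tendsto_one (by simpa [hc] using hcφ)

lemma limsup_coe_mul_of_tendsto_neg [l.NeBot] {φ q : α → ℝ} {c : ℝ} (hc : c < 0)
    (hφ : Tendsto φ l (𝓝 c)) :
    limsup (fun x => ((φ x * q x : ℝ) : EReal)) l = c * liminf (fun x => (q x : EReal)) l := by
  rw [limsup_coe_mul_eq_of_tendsto hc.ne hφ]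
  simp_rw [coe_mul]
  exact limsup_const_mul_of_nonpos_of_ne_bot (EReal.coe_nonpos.2 hc.le) (coe_ne_bot c)

end EReal

lemma comp_sub_div_eq_dslope_mul (f g : ℝ → ℝ) (x h : ℝ) :
    (f (g (x + h)) - f (g x)) / h = dslope f (g x) (g (x + h)) * ((g (x + h) - g x) / h) := by
  rw [← sub_smul_dslope f (g x) (g (x + h)), smul_eq_mul]
  ring

/-- If `f` is continuously differentiable, `g` is continuous and `f'(g x₀) < 0`, then
`D⁺(f ∘ g)(x₀) = f'(g x₀) · D₊g(x₀)` in the extended reals. -/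
theorem diniUpper_comp_of_deriv_neg (f g : ℝ → ℝ) (x₀ : ℝ)
    (hf : ContDiff ℝ 1 f) (hg : Continuous g) (hneg : deriv f (g x₀) < 0) :
    DiniUpper (f ∘ g) x₀ = ((deriv f (g x₀) : ℝ) : EReal) * DiniLower g x₀ := by
  have hg₀ : Tendsto (fun h => g (x₀ + h)) (𝓝[>] 0) (𝓝 (g x₀)) :=
    ((hg.comp (continuous_const_add x₀)).tendsto' 0 _ (by simp)).mono_left nhdsWithin_le_nhds
  have hslope : Tendsto (fun h => dslope f (g x₀) (g (x₀ + h))) (𝓝[>] 0)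
      (𝓝 (deriv f (g x₀))) := by
    rw [← dslope_same f]
    exact (continuousAt_dslope_same.2 (hf.differentiable one_ne_zero _)).tendsto.comp hg₀
  unfold DiniUpper DiniLower
  simp_rw [Function.comp_apply, comp_sub_div_eq_dslope_mul]
  exact EReal.limsup_coe_mul_of_tendsto_neg hneg hslope
end

section
/- Let α ∈ (1,3), let μ₁ be the standard Gaussian measure on ℝ (density (2π)^{−1/2} e^{−x²/2}) and let μ₂ be the probability measure on ℝ with density c_α (1+|y|^α)^{−1}, where c_α := (∫_ℝ (1+|y|^α)^{−1} dy)^{−1}. Let 1 < p < q < ∞ and let β satisfy 1/q ≤ β < 1/p. Then the function f(ξ) = |ξ|^{−β} (with f(0) := 0, say) satisfies ‖f‖_{p,q} < ∞ with respect to (μ₁, μ₂), while ∫_ℝ |f|^q d(μ₁∗μ₂) = ∞. In particular f ∈ 𝒳_{p,q}(ℝ; μ₁, μ₂) but f ∉ L^q(ℝ, μ₁∗μ₂). -/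
open MeasureTheory ENNReal ProbabilityTheory

/-- Convolution of two measures: the pushforward of the product measure under addition. -/
noncomputable def mconv {E : Type*} [MeasurableSpace E] [Add E]
    (μ ν : Measure E) : Measure E :=
  (μ.prod ν).map (fun z => z.1 + z.2)

/-- The mixed norm `‖f‖_{p,q}` with respect to `(μ₁, μ₂)`, with values in `[0,∞]`. -/
noncomputable def mixedNorm {E : Type*} [MeasurableSpace E] [Add E]
    (p q : ℝ) (μ₁ μ₂ : Measure E) (f : E → ℝ) : ℝ≥0∞ :=
  (∫⁻ y, (∫⁻ x, (ENNReal.ofReal |f (x + y)|) ^ p ∂μ₁) ^ (q / p) ∂μ₂) ^ (1 / q)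

/-- The standard Gaussian measure on `ℝ`. -/
noncomputable def stdGaussian : Measure ℝ := gaussianReal 0 1

/-- The normalization constant `c_α = (∫ (1+|y|^α)⁻¹ dy)⁻¹`. -/
noncomputable def cAlpha (α : ℝ) : ℝ := (∫ y : ℝ, (1 + |y| ^ α)⁻¹)⁻¹

/-- The probability measure on `ℝ` with density `c_α (1+|y|^α)⁻¹`. -/
noncomputable def polyMeasure (α : ℝ) : Measure ℝ :=
  MeasureTheory.volume.withDensity fun y => ENNReal.ofReal (cAlpha α * (1 + |y| ^ α)⁻¹)

/-!
Since `β p < 1`, the singularity of `|ξ|^{-βp}` is integrable, and the Gaussian density is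
bounded by `1`; so `∫ |x + y|^{-βp} dμ₁(x)` is bounded uniformly in `y`, and the mixed norm is
finite because `μ₂` is a finite measure. Since `β q ≥ 1`, the singularity of
`|ξ|^{-βq}` is not integrable, and the Gaussian density is bounded below on bounded sets; so
`∫ |x + y|^{-βq} dμ₁(x) = ∞` for every `y`, and by Tonelli the `L^q(μ₁ ∗ μ₂)` integral is infinite.
-/

open Real Set

lemma mixedNorm_lt_top_of_forall_lintegral_le {E : Type*} [MeasurableSpace E] [Add E]
    {p q : ℝ} (hp : 0 ≤ p) (hq : 0 ≤ q) {μ₁ μ₂ : Measure E} [IsFiniteMeasure μ₂] {f : E → ℝ}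
    {C : ℝ≥0∞} (hC : C ≠ ⊤) (h : ∀ y, ∫⁻ x, ENNReal.ofReal |f (x + y)| ^ p ∂μ₁ ≤ C) :
    mixedNorm p q μ₁ μ₂ f < ⊤ := by
  refine ENNReal.rpow_lt_top_of_nonneg (by positivity) (ne_of_lt ?_)
  calc ∫⁻ y, (∫⁻ x, ENNReal.ofReal |f (x + y)| ^ p ∂μ₁) ^ (q / p) ∂μ₂
      ≤ ∫⁻ _, C ^ (q / p) ∂μ₂ := lintegral_mono fun y => by gcongr; exact h y
    _ = C ^ (q / p) * μ₂ univ := lintegral_const _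
    _ < ⊤ := ENNReal.mul_lt_top (ENNReal.rpow_lt_top_of_nonneg (by positivity) hC)
        (measure_lt_top _ _)

lemma lintegral_mconv_eq_top {G : Type*} [AddCommMonoid G] [MeasurableSpace G]
    [MeasurableAdd₂ G] {μ ν : Measure G} [SFinite μ] [SFinite ν] (hν : ν ≠ 0)
    {g : G → ℝ≥0∞} (hg : Measurable g) (h : ∀ y, ∫⁻ x, g (x + y) ∂μ = ⊤) :
    ∫⁻ z, g z ∂mconv μ ν = ⊤ := by
  change ∫⁻ z, g z ∂(μ ∗ ν) = ⊤
  rw [Measure.conv_comm, Measure.lintegral_conv hg]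
  have h' (x : G) : ∫⁻ y, g (x + y) ∂μ = ⊤ := by simpa only [add_comm] using h x
  simp only [h', lintegral_const, ENNReal.top_mul (Measure.measure_univ_ne_zero.2 hν)]

lemma ofReal_abs_rpow_neg_rpow (β : ℝ) {r : ℝ} (hr : 0 ≤ r) (z : ℝ) :
    ENNReal.ofReal |(|z| ^ (-β))| ^ r = ENNReal.ofReal (|z| ^ (-(β * r))) := by
  rw [abs_of_nonneg (by positivity), ENNReal.ofReal_rpow_of_nonneg (by positivity) hr,
    ← Real.rpow_mul (abs_nonneg z), neg_mul]

lemma lintegral_Icc_abs_rpow_neg_lt_top {t : ℝ} (ht : t < 1) :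
    ∫⁻ u in Icc (-1 : ℝ) 1, ENNReal.ofReal (|u| ^ (-t)) < ⊤ := by
  have hloc : LocallyIntegrable (fun u : ℝ => |u| ^ (-t)) :=
    locallyIntegrable_of_norm_le_rpow (C := 1) (α := t) (by simp) (by simpa using ht)
      (ae_of_all _ fun u => by simp [abs_of_nonneg (by positivity : 0 ≤ |u| ^ (-t))])
      (by fun_prop : Measurable _).aestronglyMeasurable
  exact (hloc.integrableOn_isCompact isCompact_Icc).lintegral_lt_top

lemma lintegral_Ioo_abs_rpow_neg_eq_top {s : ℝ} (hs : 1 ≤ s) :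
    ∫⁻ u in Ioo (0 : ℝ) 1, ENNReal.ofReal (|u| ^ (-s)) = ⊤ := by
  have habs : EqOn (fun u : ℝ => |u| ^ (-s)) (fun u => u ^ (-s)) (Ioo 0 1) :=
    fun u hu => by simp only [abs_of_pos hu.1]
  by_contra h
  have hint : IntegrableOn (fun u : ℝ => |u| ^ (-s)) (Ioo 0 1) :=
    (lintegral_ofReal_ne_top_iff_integrable (by fun_prop : Measurable _).aestronglyMeasurable
      (ae_of_all _ fun u => by positivity)).1 h
  have := (intervalIntegral.integrableOn_Ioo_rpow_iff zero_lt_one).1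
    (hint.congr_fun habs measurableSet_Ioo)
  linarith

lemma lintegral_abs_add_rpow_neg_le {μ : Measure ℝ} (hμ : μ ≤ volume) {t : ℝ} (ht : 0 ≤ t)
    (y : ℝ) :
    ∫⁻ x, ENNReal.ofReal (|x + y| ^ (-t)) ∂μ
      ≤ μ univ + ∫⁻ u in Icc (-1 : ℝ) 1, ENNReal.ofReal (|u| ^ (-t)) := by
  set g := (Icc (-1 : ℝ) 1).indicator fun u => ENNReal.ofReal (|u| ^ (-t))
  have hbound (z : ℝ) : ENNReal.ofReal (|z| ^ (-t)) ≤ 1 + g z := by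
    by_cases hz : z ∈ Icc (-1 : ℝ) 1
    · simp [g, indicator_of_mem hz]
    · have h1 : 1 ≤ |z| := by
        contrapose! hz
        exact abs_le.1 hz.le
      calc ENNReal.ofReal (|z| ^ (-t)) ≤ 1 :=
            ENNReal.ofReal_le_one.2 (Real.rpow_le_one_of_one_le_of_nonpos h1 (by linarith))
        _ ≤ 1 + g z := le_self_add
  calc ∫⁻ x, ENNReal.ofReal (|x + y| ^ (-t)) ∂μ ≤ ∫⁻ x, (1 + g (x + y)) ∂μ :=
        lintegral_mono fun x => hbound (x + y)
    _ = μ univ + ∫⁻ x, g (x + y) ∂μ := by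
        rw [lintegral_add_left measurable_const, lintegral_const, one_mul]
    _ ≤ μ univ + ∫⁻ x, g (x + y) := by gcongr
    _ = μ univ + ∫⁻ u in Icc (-1 : ℝ) 1, ENNReal.ofReal (|u| ^ (-t)) := by
        rw [lintegral_add_right_eq_self, lintegral_indicator measurableSet_Icc]

lemma stdGaussian_eq_withDensity : _root_.stdGaussian = volume.withDensity (gaussianPDF 0 1) :=
  gaussianReal_of_var_ne_zero 0 one_ne_zero

instance : IsProbabilityMeasure _root_.stdGaussian :=
  inferInstanceAs (IsProbabilityMeasure (gaussianReal 0 1))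

lemma gaussianPDF_zero_one_le_of_abs_le {x z : ℝ} (h : |x| ≤ |z|) :
    gaussianPDF 0 1 z ≤ gaussianPDF 0 1 x := by
  have hsq : x ^ 2 ≤ z ^ 2 := sq_le_sq.2 h
  refine ENNReal.ofReal_le_ofReal
    (mul_le_mul_of_nonneg_left (Real.exp_le_exp.2 ?_) (by positivity))
  simp only [sub_zero, NNReal.coe_one, mul_one]
  linarith

lemma stdGaussian_le_volume : _root_.stdGaussian ≤ volume := by
  have hpdf (x : ℝ) : gaussianPDF 0 1 x ≤ 1 := by
    refine (gaussianPDF_zero_one_le_of_abs_le (x := 0) (by simp)).trans ?_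
    simp only [gaussianPDF, gaussianPDFReal, ENNReal.ofReal_le_one, sub_zero, NNReal.coe_one,
      mul_one, ne_eq, OfNat.ofNat_ne_zero, not_false_eq_true, zero_pow, neg_zero, zero_div,
      Real.exp_zero]
    exact inv_le_one_of_one_le₀ (Real.one_le_sqrt.2 (by linarith [Real.pi_gt_three]))
  calc _root_.stdGaussian = volume.withDensity (gaussianPDF 0 1) := stdGaussian_eq_withDensity
    _ ≤ volume.withDensity 1 := withDensity_mono (ae_of_all _ hpdf)
    _ = volume := withDensity_one

lemma lintegral_abs_add_rpow_neg_stdGaussian_eq_top {s : ℝ} (hs : 1 ≤ s) (y : ℝ) :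
    ∫⁻ x, ENNReal.ofReal (|x + y| ^ (-s)) ∂stdGaussian = ⊤ := by
  set c := gaussianPDF 0 1 (1 + |y|)
  have hc : c ≠ 0 := (gaussianPDF_pos 0 one_ne_zero _).ne'
  set g := (Ioo (0 : ℝ) 1).indicator fun u => ENNReal.ofReal (|u| ^ (-s))
  have hbound (x : ℝ) : c * g (x + y) ≤ gaussianPDF 0 1 x * ENNReal.ofReal (|x + y| ^ (-s)) := by
    by_cases hx : x + y ∈ Ioo (0 : ℝ) 1
    · simp only [g, indicator_of_mem hx]
      gcongr
      refine gaussianPDF_zero_one_le_of_abs_le (le_trans ?_ (le_abs_self _))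
      calc |x| = |(x + y) - y| := by ring_nf
        _ ≤ |x + y| + |y| := abs_sub _ _
        _ ≤ 1 + |y| := by rw [abs_of_pos hx.1]; linarith [hx.2]
    · simp [g, indicator_of_notMem hx]
  rw [stdGaussian_eq_withDensity, lintegral_withDensity_eq_lintegral_mul _
    (measurable_gaussianPDF 0 1) (by fun_prop), eq_top_iff]
  calc ⊤ = c * ∫⁻ u, g u := by
        rw [lintegral_indicator measurableSet_Ioo, lintegral_Ioo_abs_rpow_neg_eq_top hs,
          ENNReal.mul_top hc]
    _ = c * ∫⁻ x, g (x + y) := by rw [lintegral_add_right_eq_self]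
    _ = ∫⁻ x, c * g (x + y) := (lintegral_const_mul' _ _ ENNReal.ofReal_ne_top).symm
    _ ≤ _ := lintegral_mono hbound

lemma one_add_abs_rpow_le {α : ℝ} (hα : 1 ≤ α) (y : ℝ) :
    (1 + |y|) ^ α ≤ 2 ^ (α - 1) * (1 + |y| ^ α) := by
  have h := NNReal.rpow_add_le_mul_rpow_add_rpow 1 ‖y‖₊ hα
  rw [← NNReal.coe_le_coe] at h
  simpa using h

lemma integrable_inv_one_add_abs_rpow {α : ℝ} (hα : 1 < α) :
    Integrable fun y : ℝ => (1 + |y| ^ α)⁻¹ := by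
  refine ((integrable_one_add_norm (E := ℝ) (r := α) (by simpa using hα)).const_mul
    (2 ^ (α - 1))).mono' (by fun_prop : Measurable _).aestronglyMeasurable
    (ae_of_all _ fun y => ?_)
  have h1 : 0 < 1 + |y| ^ α := by positivity
  rw [Real.norm_eq_abs, abs_inv, abs_of_pos h1, Real.norm_eq_abs, Real.rpow_neg (by positivity),
    ← div_eq_mul_inv, le_div_iff₀ (by positivity), ← div_eq_inv_mul, div_le_iff₀ h1]
  exact one_add_abs_rpow_le hα.le y

lemma isProbabilityMeasure_polyMeasure {α : ℝ} (hα : 1 < α) :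
    IsProbabilityMeasure (polyMeasure α) := by
  have hint := integrable_inv_one_add_abs_rpow hα
  have hne (y : ℝ) : 1 + |y| ^ α ≠ 0 := by positivity
  have hpos : 0 < ∫ y : ℝ, (1 + |y| ^ α)⁻¹ :=
    (integral_pos_iff_support_of_nonneg (fun y => by positivity) hint).2 <| by
      simp [Function.support, hne]
  constructor
  rw [polyMeasure, withDensity_apply _ MeasurableSet.univ, Measure.restrict_univ, cAlpha,
    ← ofReal_integral_eq_lintegral_ofReal (hint.const_mul _)
      (ae_of_all _ fun y => mul_nonneg (inv_nonneg.2 hpos.le) (by positivity)),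
    integral_const_mul, inv_mul_cancel₀ hpos.ne', ENNReal.ofReal_one]

theorem rpow_neg_mem_X_not_Lq_general (α p q β : ℝ)
    (hα₁ : 1 < α) (hp : 1 < p) (hpq : p < q)
    (hβ₁ : 1 / q ≤ β) (hβ₂ : β < 1 / p) :
    mixedNorm p q stdGaussian (polyMeasure α) (fun ξ => |ξ| ^ (-β)) < ⊤ ∧
    ∫⁻ z, (ENNReal.ofReal (abs (|z| ^ (-β)))) ^ q ∂(mconv stdGaussian (polyMeasure α)) = ⊤ := by
  have hp₀ : 0 < p := by linarith
  have hq₀ : 0 < q := by linarith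
  have hβp : β * p < 1 := (lt_div_iff₀ hp₀).1 hβ₂
  have hβq : 1 ≤ β * q := (div_le_iff₀ hq₀).1 hβ₁
  have hβ₀ : 0 < β := (one_div_pos.2 hq₀).trans_le hβ₁
  have := isProbabilityMeasure_polyMeasure hα₁
  constructor
  · refine mixedNorm_lt_top_of_forall_lintegral_le hp₀.le hq₀.le
      (ENNReal.add_ne_top.2 ⟨ENNReal.one_ne_top, (lintegral_Icc_abs_rpow_neg_lt_top hβp).ne⟩)
      fun y => ?_
    simpa only [ofReal_abs_rpow_neg_rpow β hp₀.le, measure_univ] using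
      lintegral_abs_add_rpow_neg_le stdGaussian_le_volume (mul_pos hβ₀ hp₀).le y
  · refine lintegral_mconv_eq_top (IsProbabilityMeasure.ne_zero _) (by fun_prop) fun y => ?_
    simpa only [ofReal_abs_rpow_neg_rpow β hq₀.le] using
      lintegral_abs_add_rpow_neg_stdGaussian_eq_top hβq y

/-- For `α ∈ (1,3)`, `1 < p < q < ∞` and `1/q ≤ β < 1/p`, the function `ξ ↦ |ξ|^{-β}`
has finite mixed `(p,q)`-norm with respect to `(stdGaussian, polyMeasure α)` but is not in
`L^q` of their convolution. -/
theorem rpow_neg_mem_X_not_Lq (α p q β : ℝ)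
    (hα₁ : 1 < α) (hα₃ : α < 3) (hp : 1 < p) (hpq : p < q)
    (hβ₁ : 1 / q ≤ β) (hβ₂ : β < 1 / p) :
    mixedNorm p q stdGaussian (polyMeasure α) (fun ξ => |ξ| ^ (-β)) < ⊤ ∧
    ∫⁻ z, (ENNReal.ofReal (abs (|z| ^ (-β)))) ^ q ∂(mconv stdGaussian (polyMeasure α)) = ⊤ :=
  rpow_neg_mem_X_not_Lq_general α p q β hα₁ hp hpq hβ₁ hβ₂
end

section
/- Let μ₁ be the standard Gaussian measure on ℝ (density (2π)^{−1/2} e^{−x²/2}) and let μ₂ be the Laplace measure on ℝ with density (1/2) e^{−|y|}. Let 1 < p < q < ∞ and let a satisfy 1/q ≤ a < 1/p. Then the function f(ξ) = e^{a|ξ|} satisfies ∫_ℝ |f|^p d(μ₁∗μ₂) < ∞, while ‖f‖_{p,q} = ∞ with respect to (μ₁, μ₂). In particular f ∈ L^p(ℝ, μ₁∗μ₂) but f ∉ 𝒳_{p,q}(ℝ; μ₁, μ₂). -/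
open MeasureTheory ENNReal ProbabilityTheory

/-- The Laplace measure on `ℝ`, with density `(1/2) e^{-|y|}`. -/
noncomputable def laplaceMeasure : Measure ℝ :=
  MeasureTheory.volume.withDensity fun y => ENNReal.ofReal ((1 / 2) * Real.exp (-|y|))

/-!
The weight `e^{a|ξ|}` is submultiplicative, so `∫ f^p d(μ₁ ∗ μ₂)` is at most the product of the
exponential moments `∫ e^{pa|x|} dμ₁` and `∫ e^{pa|y|} dμ₂`; the Gaussian has all exponential
moments and the Laplace measure has those of order `pa < 1`. Conversely
`e^{pa|x+y|} ≥ e^{pa|y|} e^{-pa|x|}`, so the inner `L^p(μ₁)`-norm of `f(· + y)` is at least a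
positive constant times `e^{a|y|}`, and `∫ e^{qa|y|} dμ₂ = ∞` because `qa ≥ 1`.
-/

open Real

instance inst_s7 : IsProbabilityMeasure _root_.stdGaussian := by
  unfold _root_.stdGaussian; infer_instance

instance : SFinite laplaceMeasure := by
  unfold laplaceMeasure; infer_instance

lemma ofReal_exp_rpow (t r : ℝ) :
    ENNReal.ofReal (exp t) ^ r = ENNReal.ofReal (exp (r * t)) := by
  rw [ENNReal.ofReal_rpow_of_pos (exp_pos t), mul_comm, exp_mul]

lemma exp_mul_abs_add_le {c : ℝ} (hc : 0 ≤ c) (x y : ℝ) :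
    exp (c * |x + y|) ≤ exp (c * |x|) * exp (c * |y|) := by
  rw [← exp_add, exp_le_exp, ← mul_add]
  exact mul_le_mul_of_nonneg_left (abs_add_le x y) hc

lemma exp_mul_abs_mul_exp_neg_le {c : ℝ} (hc : 0 ≤ c) (x y : ℝ) :
    exp (c * |y|) * exp (-c * |x|) ≤ exp (c * |x + y|) := by
  rw [← exp_add, exp_le_exp, neg_mul, ← sub_eq_add_neg, ← mul_sub]
  refine mul_le_mul_of_nonneg_left ?_ hc
  simpa [add_comm] using abs_sub_abs_le_abs_sub y (-x)

lemma lintegral_exp_mul_abs_mconv_le {c : ℝ} (hc : 0 ≤ c) (μ ν : Measure ℝ) [SFinite ν] :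
    ∫⁻ z, ENNReal.ofReal (exp (c * |z|)) ∂mconv μ ν ≤
      (∫⁻ x, ENNReal.ofReal (exp (c * |x|)) ∂μ) * ∫⁻ y, ENNReal.ofReal (exp (c * |y|)) ∂ν := by
  rw [mconv, lintegral_map (by fun_prop) (by fun_prop),
    ← lintegral_prod_mul (by fun_prop) (by fun_prop)]
  refine lintegral_mono fun z => ?_
  rw [← ENNReal.ofReal_mul (exp_pos _).le]
  exact ENNReal.ofReal_le_ofReal (exp_mul_abs_add_le hc z.1 z.2)

lemma mul_lintegral_exp_neg_mul_abs_le {c : ℝ} (hc : 0 ≤ c) (μ : Measure ℝ) (y : ℝ) :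
    ENNReal.ofReal (exp (c * |y|)) * ∫⁻ x, ENNReal.ofReal (exp (-c * |x|)) ∂μ ≤
      ∫⁻ x, ENNReal.ofReal (exp (c * |x + y|)) ∂μ := by
  rw [← lintegral_const_mul' _ _ ofReal_ne_top]
  refine lintegral_mono fun x => ?_
  rw [← ENNReal.ofReal_mul (exp_pos _).le]
  exact ENNReal.ofReal_le_ofReal (exp_mul_abs_mul_exp_neg_le hc x y)

lemma lintegral_ofReal_exp_pos {α : Type*} [MeasurableSpace α] (μ : Measure α) [NeZero μ]
    {g : α → ℝ} (hg : Measurable g) : 0 < ∫⁻ x, ENNReal.ofReal (exp (g x)) ∂μ := by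
  rw [lintegral_pos_iff_support (by fun_prop)]
  simp [Function.support, exp_pos, NeZero.ne μ]

lemma integrable_exp_mul_abs_gaussianReal (m : ℝ) (v : NNReal) (c : ℝ) :
    Integrable (fun x => exp (c * |x|)) (gaussianReal m v) :=
  integrable_exp_mul_abs (X := id) (integrable_exp_mul_gaussianReal c)
    (integrable_exp_mul_gaussianReal (-c))

lemma integrable_exp_mul_abs_of_neg {b : ℝ} (hb : b < 0) :
    Integrable fun x : ℝ => exp (b * |x|) := by
  -- the Bochner integral of a non-integrable function is `0`
  refine Integrable.of_integral_ne_zero ?_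
  rw [integral_comp_abs (f := fun x => exp (b * x)), integral_exp_mul_Ioi hb 0]
  simp [hb.ne]

lemma lintegral_exp_mul_abs_laplaceMeasure (c : ℝ) :
    ∫⁻ y, ENNReal.ofReal (exp (c * |y|)) ∂laplaceMeasure =
      ∫⁻ y, ENNReal.ofReal ((1 / 2) * exp ((c - 1) * |y|)) := by
  rw [laplaceMeasure, lintegral_withDensity_eq_lintegral_mul _ (by fun_prop) (by fun_prop)]
  congr 1 with y
  rw [Pi.mul_apply, ← ENNReal.ofReal_mul (by positivity), mul_assoc, ← exp_add]
  ring_nf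

lemma lintegral_exp_mul_abs_laplaceMeasure_lt_top {c : ℝ} (hc : c < 1) :
    ∫⁻ y, ENNReal.ofReal (exp (c * |y|)) ∂laplaceMeasure < ⊤ := by
  rw [lintegral_exp_mul_abs_laplaceMeasure]
  exact ((integrable_exp_mul_abs_of_neg (sub_neg.2 hc)).const_mul _).lintegral_lt_top

lemma lintegral_exp_mul_abs_laplaceMeasure_eq_top {c : ℝ} (hc : 1 ≤ c) :
    ∫⁻ y, ENNReal.ofReal (exp (c * |y|)) ∂laplaceMeasure = ⊤ := by
  rw [lintegral_exp_mul_abs_laplaceMeasure, eq_top_iff]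
  calc (⊤ : ℝ≥0∞) = ∫⁻ _ : ℝ, ENNReal.ofReal (1 / 2) := by simp
    _ ≤ _ := lintegral_mono fun y => ENNReal.ofReal_le_ofReal <|
      le_mul_of_one_le_right (by norm_num) (one_le_exp (by nlinarith [abs_nonneg y]))

lemma lintegral_rpow_lintegral_exp_mul_abs_add_eq_top {c r : ℝ} (hc : 0 ≤ c) (hr : 0 < r)
    (hrc : 1 ≤ r * c) (μ : Measure ℝ) [NeZero μ] :
    ∫⁻ y, (∫⁻ x, ENNReal.ofReal (exp (c * |x + y|)) ∂μ) ^ r ∂laplaceMeasure = ⊤ := by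
  set K := ∫⁻ x, ENNReal.ofReal (exp (-c * |x|)) ∂μ
  have hK : K ^ r ≠ 0 :=
    (ENNReal.rpow_pos_of_nonneg (lintegral_ofReal_exp_pos μ (by fun_prop)) hr.le).ne'
  rw [eq_top_iff]
  calc ⊤ = K ^ r * ∫⁻ y, ENNReal.ofReal (exp (r * c * |y|)) ∂laplaceMeasure := by
        rw [lintegral_exp_mul_abs_laplaceMeasure_eq_top hrc, mul_top hK]
    _ = ∫⁻ y, (ENNReal.ofReal (exp (c * |y|)) * K) ^ r ∂laplaceMeasure := by
        rw [← lintegral_const_mul _ (by fun_prop)]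
        congr 1 with y
        rw [ENNReal.mul_rpow_of_nonneg _ _ hr.le, ofReal_exp_rpow, mul_comm, mul_assoc]
    _ ≤ _ := lintegral_mono fun y =>
        ENNReal.rpow_le_rpow (mul_lintegral_exp_neg_mul_abs_le hc μ y) hr.le

/-- For `1 < p < q < ∞` and `1/q ≤ a < 1/p`, the function `ξ ↦ e^{a|ξ|}`
lies in `L^p` of the convolution `stdGaussian ∗ laplaceMeasure` but has infinite mixed
`(p,q)`-norm with respect to `(stdGaussian, laplaceMeasure)`. -/
theorem exp_abs_mem_Lp_not_X (p q a : ℝ)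
    (hp : 1 < p) (hpq : p < q) (ha₁ : 1 / q ≤ a) (ha₂ : a < 1 / p) :
    (∫⁻ z, (ENNReal.ofReal (abs (Real.exp (a * |z|)))) ^ p
        ∂(mconv stdGaussian laplaceMeasure)) < ⊤ ∧
    mixedNorm p q stdGaussian laplaceMeasure (fun ξ => Real.exp (a * |ξ|)) = ⊤ := by
  have hp₀ : 0 < p := by linarith
  have hq₀ : 0 < q := by linarith
  have ha₀ : 0 < a := (one_div_pos.2 hq₀).trans_le ha₁
  have hpa : a * p < 1 := (lt_div_iff₀ hp₀).mp ha₂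
  have hqa : 1 ≤ a * q := (div_le_iff₀ hq₀).mp ha₁
  rw [mixedNorm]
  simp only [abs_exp, ofReal_exp_rpow, ← mul_assoc]
  constructor
  · calc _ ≤ _ := lintegral_exp_mul_abs_mconv_le (by positivity) _ _
      _ < ⊤ := mul_lt_top (integrable_exp_mul_abs_gaussianReal 0 1 _).lintegral_lt_top
          (lintegral_exp_mul_abs_laplaceMeasure_lt_top (by linarith))
  · have hqpa : 1 ≤ q / p * (p * a) := by field_simp; linarith
    rw [lintegral_rpow_lintegral_exp_mul_abs_add_eq_top (by positivity) (by positivity) hqpa,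
      top_rpow_of_pos (by positivity)]
end

section
/- Let E be a separable real Banach space, let T : E → E be a continuous linear operator, let γ, π, ρ_γ, ρ_π be Borel probability measures on E, set ρ := ρ_γ ∗ ρ_π, and assume (((γ∗π) ∘ T⁻¹) ∗ ρ) = γ ∗ π. Let f : E → ℝ be Borel measurable with ∫_E |f| d(γ∗π) < ∞. Then for (γ ⊗ π)-almost every (x,y) ∈ E × E, the function z ↦ f(T(x) + T(y) + z) is ρ-integrable and ∫_E f(T(x+y) + z) dρ(z) = ∫_E ∫_E f(T(x) + z₁ + T(y) + z₂) dρ_γ(z₁) dρ_π(z₂). -/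
open MeasureTheory

theorem mconv_eq_conv {E : Type*} [MeasurableSpace E] [AddMonoid E] (μ ν : Measure E) :
    mconv μ ν = μ ∗ ν :=
  rfl

theorem ae_integrable_comp_add_of_integrable_map_conv {G E F : Type*} [MeasurableSpace G]
    [MeasurableSpace E] [AddMonoid E] [MeasurableAdd₂ E] [NormedAddCommGroup F]
    {μ : Measure G} {ρ : Measure E} [SFinite ρ] {T : G → E} (hT : AEMeasurable T μ)
    {f : E → F} (hf : Integrable f (μ.map T ∗ ρ)) :
    ∀ᵐ s ∂μ, Integrable (fun w => f (T s + w)) ρ :=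
  ae_of_ae_map hT ((integrable_conv_iff hf.1).1 hf).1

theorem PT_factorization_general
    {E : Type*} [NormedAddCommGroup E] [NormedSpace ℝ E]
    [TopologicalSpace.SeparableSpace E] [MeasurableSpace E] [BorelSpace E]
    (T : E →L[ℝ] E) (γ π ργ ρπ : Measure E)
    [IsProbabilityMeasure γ] [IsProbabilityMeasure π]
    [IsProbabilityMeasure ργ] [IsProbabilityMeasure ρπ]
    (hskew : mconv ((mconv γ π).map T) (mconv ργ ρπ) = mconv γ π)
    (f : E → ℝ) (hfint : Integrable f (mconv γ π)) :
    ∀ᵐ z ∂(γ.prod π),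
      Integrable (fun w => f (T z.1 + T z.2 + w)) (mconv ργ ρπ) ∧
      ∫ w, f (T (z.1 + z.2) + w) ∂(mconv ργ ρπ) =
        ∫ w₂, ∫ w₁, f (T z.1 + w₁ + T z.2 + w₂) ∂ργ ∂ρπ := by
  simp only [mconv_eq_conv] at hskew hfint ⊢
  have htranslate : ∀ᵐ s ∂(γ ∗ π), Integrable (fun w => f (T s + w)) (ργ ∗ ρπ) :=
    ae_integrable_comp_add_of_integrable_map_conv T.measurable.aemeasurable (by rwa [hskew])
  filter_upwards [ae_of_ae_map measurable_add.aemeasurable htranslate] with z hz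
  rw [map_add] at hz ⊢
  refine ⟨hz, ?_⟩
  rw [Measure.conv_comm, integral_conv (Measure.conv_comm ργ ρπ ▸ hz)]
  congr! 4 with w₂ w₁
  exact congrArg f (by abel)

/-- If `T` is skew with respect to `γ ∗ π` with factor `ρ = ρ_γ ∗ ρ_π` and `f` is
`(γ∗π)`-integrable, then for `(γ ⊗ π)`-almost every `(x,y)`, `z ↦ f(Tx + Ty + z)` is
`ρ`-integrable and `∫ f(T(x+y)+z) dρ(z) = ∫∫ f(Tx + z₁ + Ty + z₂) dρ_γ(z₁) dρ_π(z₂)`. -/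
theorem PT_factorization
    {E : Type*} [NormedAddCommGroup E] [NormedSpace ℝ E] [CompleteSpace E]
    [TopologicalSpace.SeparableSpace E] [MeasurableSpace E] [BorelSpace E]
    (T : E →L[ℝ] E) (γ π ργ ρπ : Measure E)
    [IsProbabilityMeasure γ] [IsProbabilityMeasure π]
    [IsProbabilityMeasure ργ] [IsProbabilityMeasure ρπ]
    (hskew : mconv ((mconv γ π).map T) (mconv ργ ρπ) = mconv γ π)
    (f : E → ℝ) (hf : Measurable f) (hfint : Integrable f (mconv γ π)) :
    ∀ᵐ z ∂(γ.prod π),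
      Integrable (fun w => f (T z.1 + T z.2 + w)) (mconv ργ ρπ) ∧
      ∫ w, f (T (z.1 + z.2) + w) ∂(mconv ργ ρπ) =
        ∫ w₂, ∫ w₁, f (T z.1 + w₁ + T z.2 + w₂) ∂ργ ∂ρπ :=
  PT_factorization_general T γ π ργ ρπ hskew f hfint
end

section
/- Let E be a separable real Banach space, let T : E → E be a continuous linear operator, and let γ, π, ρ_γ, ρ_π be Borel probability measures on E such that ((γ ∘ T⁻¹) ∗ ρ_γ) = γ and ((π ∘ T⁻¹) ∗ ρ_π) = π. Let 1 < p ≤ q < ∞ and assume the hypercontractivity of the γ-factor: for every bounded Borel g : E → ℝ, (∫_E |P_T^γ g|^q dγ)^{1/q} ≤ (∫_E |g|^p dγ)^{1/p}, where P_T^γ g(x) := ∫_E g(T(x)+z) dρ_γ(z). Then for every bounded Borel f : E → ℝ, setting P_T f(x) := ∫_E f(T(x)+z) d(ρ_γ∗ρ_π)(z), one has (∫_E |P_T f|^q d(γ∗π))^{1/q} ≤ ‖f‖_{p,q}, where the mixed norm is taken with respect to (γ, π). -/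
/-!
Write `Q_ρ g (a) = ∫ g (a + z) dρ(z)`, so that `P_T f = Q_{ργ∗ρπ} f ∘ T` and
`Q_{ργ∗ρπ} = Q_{ρπ} ∘ Q_{ργ}`. Jensen's inequality for the `ρπ`-average (`q ≥ 1`) bounds
`|P_T f (x)|^q` by `∫ |Q_{ργ} f (T x + v)|^q dρπ(v)`. Splitting `x = x' + y` with `x' ∼ γ`,
`y ∼ π` and using additivity of `T`, the `x'`-integral is the hypercontractive estimate for the
translate `f (· + T y + v)`, bounded by `Φ (T y + v)^{q/p}` with `Φ c = ∫ |f (x + c)|^p dγ(x)`.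
Integrating in `(y, v)` integrates `Φ^{q/p}` against `(π ∘ T⁻¹) ∗ ρπ = π`, which gives
`‖f‖_{p,q}^q`.
-/


open MeasureTheory ENNReal

theorem ofReal_abs_integral_rpow_le {α : Type*} [MeasurableSpace α] {μ : Measure α}
    [IsProbabilityMeasure μ] {h : α → ℝ} (hh : AEStronglyMeasurable h μ) {r : ℝ} (hr : 1 ≤ r) :
    ENNReal.ofReal (|∫ a, h a ∂μ| ^ r) ≤ ∫⁻ a, ENNReal.ofReal (|h a| ^ r) ∂μ := by
  have hr0 : 0 < r := zero_lt_one.trans_le hr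
  have key : ‖∫ a, h a ∂μ‖ₑ ≤ eLpNorm h (ENNReal.ofReal r) μ :=
    calc ‖∫ a, h a ∂μ‖ₑ ≤ ∫⁻ a, ‖h a‖ₑ ∂μ := enorm_integral_le_lintegral_enorm h
      _ = eLpNorm h 1 μ := eLpNorm_one_eq_lintegral_enorm.symm
      _ ≤ eLpNorm h (ENNReal.ofReal r) μ :=
        eLpNorm_le_eLpNorm_of_exponent_le (by simpa using hr) hh
  rw [eLpNorm_eq_lintegral_rpow_enorm_toReal (by simpa using hr0) ofReal_ne_top,
    ENNReal.toReal_ofReal hr0.le, one_div, ENNReal.le_rpow_inv_iff hr0] at key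
  simpa only [Real.enorm_eq_ofReal_abs, ← ENNReal.ofReal_rpow_of_nonneg (abs_nonneg _) hr0.le]
    using key

section Add

variable {E : Type*} [MeasurableSpace E] [Add E]

instance (μ ν : Measure E) [IsFiniteMeasure μ] [IsFiniteMeasure ν] :
    IsFiniteMeasure (mconv μ ν) := by
  unfold mconv; infer_instance

/-- The paper's operator is `P_T f = translAvg ρ f ∘ T`. -/
noncomputable def translAvg (ρ : Measure E) (f : E → ℝ) (a : E) : ℝ :=
  ∫ z, f (a + z) ∂ρ

theorem abs_translAvg_le (ρ : Measure E) [IsProbabilityMeasure ρ] {f : E → ℝ} {C : ℝ}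
    (hfC : ∀ x, |f x| ≤ C) (a : E) : |translAvg ρ f a| ≤ C := by
  simpa [translAvg] using norm_integral_le_of_norm_le_const (μ := ρ)
    (ae_of_all _ fun z => (Real.norm_eq_abs _).trans_le (hfC (a + z)))

variable [MeasurableAdd₂ E]

theorem lintegral_mconv (μ ν : Measure E) [SFinite ν] {g : E → ℝ≥0∞} (hg : Measurable g) :
    ∫⁻ z, g z ∂(mconv μ ν) = ∫⁻ x, ∫⁻ y, g (x + y) ∂ν ∂μ := by
  rw [mconv, lintegral_map hg measurable_add]
  exact lintegral_prod _ (hg.comp measurable_add).aemeasurable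

theorem integral_mconv {G : Type*} [NormedAddCommGroup G] [NormedSpace ℝ G]
    (μ ν : Measure E) [SFinite μ] [SFinite ν] {f : E → G} (hf : Integrable f (mconv μ ν)) :
    ∫ z, f z ∂(mconv μ ν) = ∫ x, ∫ y, f (x + y) ∂ν ∂μ := by
  rw [mconv, integral_map measurable_add.aemeasurable hf.1]
  exact integral_prod _ ((integrable_map_measure hf.1 measurable_add.aemeasurable).1 hf)

theorem measurable_translAvg (ρ : Measure E) [SFinite ρ] {f : E → ℝ} (hf : Measurable f) :
    Measurable (translAvg ρ f) :=
  (hf.comp measurable_add).stronglyMeasurable.integral_prod_right'.measurable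

theorem ofReal_abs_translAvg_rpow_le (ρ : Measure E) [IsProbabilityMeasure ρ] {f : E → ℝ}
    (hf : Measurable f) {r : ℝ} (hr : 1 ≤ r) (a : E) :
    ENNReal.ofReal (|translAvg ρ f a| ^ r) ≤ ∫⁻ z, ENNReal.ofReal (|f (a + z)| ^ r) ∂ρ :=
  ofReal_abs_integral_rpow_le (hf.comp (measurable_const_add a)).aestronglyMeasurable hr

end Add

section AddCommMonoid

variable {E : Type*} [MeasurableSpace E] [AddCommMonoid E] [MeasurableAdd₂ E]

theorem mconv_comm (μ ν : Measure E) [SFinite μ] [SFinite ν] : mconv μ ν = mconv ν μ := by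
  rw [mconv, mconv, ← Measure.prod_swap, Measure.map_map measurable_add measurable_swap]
  simp only [Function.comp_def, Prod.fst_swap, Prod.snd_swap, add_comm]

theorem translAvg_mconv (ρ₁ ρ₂ : Measure E) [IsFiniteMeasure ρ₁] [IsFiniteMeasure ρ₂]
    {f : E → ℝ} (hf : Measurable f) {C : ℝ} (hfC : ∀ x, |f x| ≤ C) :
    translAvg (mconv ρ₁ ρ₂) f = translAvg ρ₂ (translAvg ρ₁ f) := by
  ext a
  have hint : Integrable (fun z => f (a + z)) (mconv ρ₂ ρ₁) :=
    .of_bound (hf.comp (measurable_const_add a)).aestronglyMeasurable C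
      (ae_of_all _ fun z => (Real.norm_eq_abs _).trans_le (hfC (a + z)))
  simp only [translAvg, mconv_comm ρ₁ ρ₂, integral_mconv ρ₂ ρ₁ hint, add_assoc]

theorem lintegral_rpow_translAvg_le_of_mconv_map_eq {F : Type*} [FunLike F E E]
    [AddMonoidHomClass F E E] (T : F) (hT : Measurable T)
    (γ π ρ : Measure E) [SFinite γ] [SFinite π] [IsProbabilityMeasure ρ]
    (hπ : mconv (π.map T) ρ = π) {K : E → ℝ} (hK : Measurable K) {r : ℝ} (hr : 1 ≤ r)
    {Φ : E → ℝ≥0∞} (hΦ : Measurable Φ)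
    (hγ : ∀ c, ∫⁻ x, ENNReal.ofReal (|K (T x + c)| ^ r) ∂γ ≤ Φ c) :
    ∫⁻ x, ENNReal.ofReal (|translAvg ρ K (T x)| ^ r) ∂(mconv γ π) ≤ ∫⁻ y, Φ y ∂π := by
  have hF : Measurable fun x => ∫⁻ v, ENNReal.ofReal (|K (T x + v)| ^ r) ∂ρ :=
    (show Measurable fun p : E × E => ENNReal.ofReal (|K (T p.1 + p.2)| ^ r) by
      fun_prop).lintegral_prod_right'
  calc ∫⁻ x, ENNReal.ofReal (|translAvg ρ K (T x)| ^ r) ∂(mconv γ π)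
      ≤ ∫⁻ x, ∫⁻ v, ENNReal.ofReal (|K (T x + v)| ^ r) ∂ρ ∂(mconv γ π) :=
        lintegral_mono fun x => ofReal_abs_translAvg_rpow_le ρ hK hr (T x)
    _ = ∫⁻ x, ∫⁻ y, ∫⁻ v, ENNReal.ofReal (|K (T x + (T y + v))| ^ r) ∂ρ ∂π ∂γ := by
        rw [lintegral_mconv _ _ hF]
        simp only [map_add, add_assoc]
    _ = ∫⁻ y, ∫⁻ v, ∫⁻ x, ENNReal.ofReal (|K (T x + (T y + v))| ^ r) ∂γ ∂ρ ∂π := by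
        rw [lintegral_lintegral_swap (by fun_prop)]
        refine lintegral_congr fun y => lintegral_lintegral_swap ?_
        fun_prop
    _ ≤ ∫⁻ y, ∫⁻ v, Φ (T y + v) ∂ρ ∂π := by
        gcongr with y v
        exact hγ _
    _ = ∫⁻ w, Φ w ∂(mconv (π.map T) ρ) := by
        rw [lintegral_mconv _ _ hΦ, lintegral_map _ hT]
        exact (hΦ.comp measurable_add).lintegral_prod_right'
    _ = ∫⁻ y, Φ y ∂π := by rw [hπ]

end AddCommMonoid

theorem PT_hypercontractive_mixed_to_Lq_general
    {E : Type*} [NormedAddCommGroup E] [NormedSpace ℝ E]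
    [TopologicalSpace.SeparableSpace E] [MeasurableSpace E] [BorelSpace E]
    (T : E →L[ℝ] E) (γ π ργ ρπ : Measure E)
    [IsProbabilityMeasure γ] [IsProbabilityMeasure π]
    [IsProbabilityMeasure ργ] [IsProbabilityMeasure ρπ]
    (hπ : mconv (π.map T) ρπ = π)
    (p q : ℝ) (hp : 1 < p) (hpq : p ≤ q)
    (hhyper : ∀ g : E → ℝ, Measurable g → (∃ C, ∀ x, |g x| ≤ C) →
      (∫⁻ x, ENNReal.ofReal (|∫ z, g (T x + z) ∂ργ| ^ q) ∂γ) ^ (1 / q)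
        ≤ (∫⁻ x, ENNReal.ofReal (|g x| ^ p) ∂γ) ^ (1 / p))
    (f : E → ℝ) (hf : Measurable f) (hfb : ∃ C, ∀ x, |f x| ≤ C) :
    (∫⁻ x, ENNReal.ofReal (|∫ z, f (T x + z) ∂(mconv ργ ρπ)| ^ q) ∂(mconv γ π)) ^ (1 / q)
      ≤ mixedNorm p q γ π f := by
  obtain ⟨C, hC⟩ := hfb
  have hq : 0 < q := by linarith
  set Φ : E → ℝ≥0∞ := fun c => ∫⁻ x, ENNReal.ofReal (|f (x + c)| ^ p) ∂γ
  have hΦ : Measurable Φ :=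
    (show Measurable fun w : E × E => ENNReal.ofReal (|f (w.2 + w.1)| ^ p) by
      fun_prop).lintegral_prod_right'
  have hshift (c : E) :
      ∫⁻ x, ENNReal.ofReal (|translAvg ργ f (T x + c)| ^ q) ∂γ ≤ Φ c ^ (q / p) := by
    have h := hhyper (fun s => f (s + c)) (hf.comp (measurable_add_const c)) ⟨C, fun s => hC _⟩
    rw [one_div, ENNReal.rpow_inv_le_iff hq, ← ENNReal.rpow_mul, one_div_mul_eq_div] at h
    simpa only [translAvg, add_right_comm] using h
  have hmixed : mixedNorm p q γ π f = (∫⁻ y, Φ y ^ (q / p) ∂π) ^ (1 / q) := by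
    simp only [mixedNorm, Φ, ENNReal.ofReal_rpow_of_nonneg (abs_nonneg _) (by linarith : 0 ≤ p)]
  rw [hmixed]
  refine ENNReal.rpow_le_rpow ?_ (by positivity)
  change ∫⁻ x, ENNReal.ofReal (|translAvg (mconv ργ ρπ) f (T x)| ^ q) ∂(mconv γ π) ≤ _
  rw [translAvg_mconv ργ ρπ hf hC]
  exact lintegral_rpow_translAvg_le_of_mconv_map_eq T T.measurable γ π ρπ hπ
    (measurable_translAvg ργ hf) (by linarith) (hΦ.pow_const _) hshift

/-- Hypercontractivity type estimate: if the Gaussian factor of `P_T` is `L^p(γ)`–`L^q(γ)`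
hypercontractive, then `‖P_T f‖_{L^q(γ∗π)} ≤ ‖f‖_{p,q}` for all bounded Borel `f`. -/
theorem PT_hypercontractive_mixed_to_Lq
    {E : Type*} [NormedAddCommGroup E] [NormedSpace ℝ E] [CompleteSpace E]
    [TopologicalSpace.SeparableSpace E] [MeasurableSpace E] [BorelSpace E]
    (T : E →L[ℝ] E) (γ π ργ ρπ : Measure E)
    [IsProbabilityMeasure γ] [IsProbabilityMeasure π]
    [IsProbabilityMeasure ργ] [IsProbabilityMeasure ρπ]
    (hγ : mconv (γ.map T) ργ = γ) (hπ : mconv (π.map T) ρπ = π)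
    (p q : ℝ) (hp : 1 < p) (hpq : p ≤ q)
    (hhyper : ∀ g : E → ℝ, Measurable g → (∃ C, ∀ x, |g x| ≤ C) →
      (∫⁻ x, ENNReal.ofReal (|∫ z, g (T x + z) ∂ργ| ^ q) ∂γ) ^ (1 / q)
        ≤ (∫⁻ x, ENNReal.ofReal (|g x| ^ p) ∂γ) ^ (1 / p))
    (f : E → ℝ) (hf : Measurable f) (hfb : ∃ C, ∀ x, |f x| ≤ C) :
    (∫⁻ x, ENNReal.ofReal (|∫ z, f (T x + z) ∂(mconv ργ ρπ)| ^ q) ∂(mconv γ π)) ^ (1 / q)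
      ≤ mixedNorm p q γ π f :=
  PT_hypercontractive_mixed_to_Lq_general T γ π ργ ρπ hπ p q hp hpq hhyper f hf hfb
end

section
/- Let E be a separable real Banach space, let T : E → E be Borel measurable, let γ, π, ρ be Borel probability measures on E with (((γ∗π) ∘ T⁻¹) ∗ ρ) = γ∗π, and let κ ≥ 1. Define P_T g(x) := ∫_E g(T(x)+z) dρ(z). Assume that for every r ∈ (1,∞) and every nonnegative Borel g : E → [0,∞), ‖P_T g‖_{1+(r−1)κ, r} ≤ (∫_E g^r d(γ∗π))^{1/r}, where the mixed norm is taken with respect to (γ, π) (both sides possibly infinite). Then for every Borel f : E → ℝ with ∫_E |f| d(γ∗π) < ∞ and ∫_E e^f d(γ∗π) < ∞, one has the weak hypercontractivity estimate ∫_E (∫_E e^{κ (P_T f)(x+y)} dγ(x))^{1/κ} dπ(y) ≤ ∫_E e^f d(γ∗π). -/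
open MeasureTheory ENNReal

/-- The mixed norm `‖F‖_{p,q}` of an `[0,∞]`-valued function with respect to `(μ₁, μ₂)`. -/
noncomputable def mixedNormE {E : Type*} [MeasurableSpace E] [Add E]
    (p q : ℝ) (μ₁ μ₂ : Measure E) (F : E → ℝ≥0∞) : ℝ≥0∞ :=
  (∫⁻ y, (∫⁻ x, (F (x + y)) ^ p ∂μ₁) ^ (q / p) ∂μ₂) ^ (1 / q)

/-!
Apply the hypothesis to `g = exp (f / r)`. Jensen's inequality for `ρ` gives
`exp (P_T f / r) ≤ P_T g` pointwise, so with `V = exp (P_T f)` and `p = 1 + (r - 1) κ`,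
`‖V ^ (1/r)‖_{p,r} ^ r = ∫ (∫ V ^ (p/r) dγ) ^ (r/p) dπ ≤ ∫ e^f d(γ∗π)`.
The exponent `p / r = κ - (κ - 1) / r` increases to `κ` as `r → ∞`; the inner integrals
converge, and Fatou's lemma for the outer integral yields the bound at exponent `κ`.
The invariance `((γ∗π) ∘ T⁻¹) ∗ ρ = γ∗π` makes `f (T w + ·)` integrable for `(γ∗π)`-a.e. `w`,
so that `P_T f` is well defined.
-/

open Filter Topology

theorem Filter.Tendsto.ennrpow {α : Type*} {l : Filter α} {u : α → ℝ≥0∞} {v : α → ℝ}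
    {x : ℝ≥0∞} {t : ℝ} (hu : Tendsto u l (𝓝 x)) (hv : Tendsto v l (𝓝 t)) (ht : 0 < t) :
    Tendsto (fun a => u a ^ v a) l (𝓝 (x ^ t)) := by
  have hv_pos : ∀ᶠ a in l, t / 2 < v a := hv.eventually (eventually_gt_nhds (by linarith))
  by_cases hx : x = ⊤
  · subst hx
    rw [top_rpow_of_pos ht]
    have hu_one : ∀ᶠ a in l, 1 ≤ u a := hu.eventually (eventually_ge_nhds one_lt_top)
    refine tendsto_nhds_top_mono (f := fun a => u a ^ (t / 2)) ?_ ?_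
    · simpa [top_rpow_of_pos (half_pos ht)] using hu.ennrpow_const (t / 2)
    · filter_upwards [hu_one, hv_pos] with a h1 h2
      exact rpow_le_rpow_of_exponent_le h1 h2.le
  · have hu_fin : ∀ᶠ a in l, u a ≠ ⊤ := hu.eventually (eventually_ne_nhds hx)
    have hlim := ((tendsto_toNNReal hx).comp hu).nnrpow hv (Or.inr ht)
    rw [← coe_toNNReal hx, ← coe_rpow_of_nonneg _ ht.le]
    refine (tendsto_coe.2 hlim).congr' ?_
    filter_upwards [hu_fin, hv_pos] with a h1 h2
    rw [Function.comp_apply, coe_rpow_of_nonneg _ (by linarith), coe_toNNReal h1]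

theorem tendsto_lintegral_rpow_of_monotone {α : Type*} [MeasurableSpace α] {μ : Measure α}
    [IsFiniteMeasure μ] {g : α → ℝ≥0∞} (hg : Measurable g) {s : ℕ → ℝ} {t : ℝ}
    (hs : Monotone s) (hs0 : ∀ n, 0 ≤ s n) (hst : Tendsto s atTop (𝓝 t)) (ht : 0 < t) :
    Tendsto (fun n => ∫⁻ a, g a ^ s n ∂μ) atTop (𝓝 (∫⁻ a, g a ^ t ∂μ)) := by
  have hlim : ∀ a, Tendsto (fun n => g a ^ s n) atTop (𝓝 (g a ^ t)) :=
    fun a => tendsto_const_nhds.ennrpow hst ht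
  have hS : MeasurableSet {a | 1 ≤ g a} := measurableSet_le measurable_const hg
  -- Where `g ≥ 1` the powers increase with the exponent; elsewhere they are bounded by `1`.
  have hbig : Tendsto (fun n => ∫⁻ a in {a | 1 ≤ g a}, g a ^ s n ∂μ) atTop
      (𝓝 (∫⁻ a in {a | 1 ≤ g a}, g a ^ t ∂μ)) := by
    refine lintegral_tendsto_of_tendsto_of_monotone (fun n => (hg.pow_const _).aemeasurable)
      ?_ (Eventually.of_forall hlim)
    filter_upwards [ae_restrict_mem hS] with a ha m n hmn
    exact rpow_le_rpow_of_exponent_le ha (hs hmn)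
  have hsmall : Tendsto (fun n => ∫⁻ a in {a | 1 ≤ g a}ᶜ, g a ^ s n ∂μ) atTop
      (𝓝 (∫⁻ a in {a | 1 ≤ g a}ᶜ, g a ^ t ∂μ)) := by
    refine tendsto_lintegral_of_dominated_convergence 1 (fun n => hg.pow_const _) (fun n => ?_)
      (by simp) (Eventually.of_forall hlim)
    filter_upwards [ae_restrict_mem hS.compl] with a ha
    exact rpow_le_one (not_le.1 (Set.notMem_ofPred_iff.1 ha)).le (hs0 n)
  simpa only [lintegral_add_compl _ hS] using hbig.add hsmall

theorem ofReal_exp_integral_le_lintegral {α : Type*} [MeasurableSpace α] {μ : Measure α}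
    [IsProbabilityMeasure μ] {h : α → ℝ} (hh : Integrable h μ) :
    ENNReal.ofReal (Real.exp (∫ a, h a ∂μ)) ≤ ∫⁻ a, ENNReal.ofReal (Real.exp (h a)) ∂μ := by
  by_cases hexp : Integrable (fun a => Real.exp (h a)) μ
  · rw [← ofReal_integral_eq_lintegral_ofReal hexp (ae_of_all _ fun a => (Real.exp_pos _).le)]
    exact ofReal_le_ofReal (convexOn_exp.map_integral_le Real.continuous_exp.continuousOn
      isClosed_univ (ae_of_all _ fun _ => trivial) hh hexp)
  · rw [not_not.1 (mt (lintegral_ofReal_ne_top_iff_integrable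
      (Real.continuous_exp.comp_aestronglyMeasurable hh.1)
      (ae_of_all _ fun a => (Real.exp_pos _).le)).1 hexp)]
    exact le_top

section Convolution

variable {E : Type*} [MeasurableSpace E] [Add E] [MeasurableAdd₂ E] {μ ν : Measure E}
  [SFinite μ] [SFinite ν]

instance [IsProbabilityMeasure μ] [IsProbabilityMeasure ν] : IsProbabilityMeasure (mconv μ ν) :=
  Measure.isProbabilityMeasure_map measurable_add.aemeasurable

theorem ae_ae_add_of_ae_mconv {P : E → Prop} (h : ∀ᵐ w ∂mconv μ ν, P w) :
    ∀ᵐ y ∂ν, ∀ᵐ x ∂μ, P (x + y) := by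
  rw [mconv, ← Measure.prod_swap, Measure.map_map measurable_add measurable_swap] at h
  exact Measure.ae_ae_of_ae_prod (ae_of_ae_map (by fun_prop) h)

theorem ae_integrable_add_of_integrable_mconv {F : Type*} [NormedAddCommGroup F] {f : E → F}
    (hf : Integrable f (mconv μ ν)) : ∀ᵐ x ∂μ, Integrable (fun y => f (x + y)) ν :=
  ((integrable_map_measure hf.1 measurable_add.aemeasurable).1 hf).prod_right_ae

end Convolution

section MixedNorm

variable {E : Type*} [MeasurableSpace E] [Add E] {μ₁ μ₂ : Measure E}

theorem mixedNormE_mono_ae [MeasurableAdd₂ E] [SFinite μ₁] [SFinite μ₂] {p q : ℝ} (hp : 0 ≤ p)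
    (hq : 0 ≤ q) {F G : E → ℝ≥0∞} (h : F ≤ᵐ[mconv μ₁ μ₂] G) :
    mixedNormE p q μ₁ μ₂ F ≤ mixedNormE p q μ₁ μ₂ G := by
  refine rpow_le_rpow (lintegral_mono_ae ((ae_ae_add_of_ae_mconv h).mono fun y hy => ?_))
    (by positivity)
  exact rpow_le_rpow (lintegral_mono_ae (hy.mono fun x hx => rpow_le_rpow hx hp))
    (div_nonneg hq hp)

theorem mixedNormE_rpow_inv (p : ℝ) {q : ℝ} (hq : q ≠ 0) (F : E → ℝ≥0∞) :
    mixedNormE p q μ₁ μ₂ (fun w => F w ^ q⁻¹) ^ q = mixedNormE (p / q) 1 μ₁ μ₂ F := by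
  simp only [mixedNormE, ← rpow_mul, one_div_mul_cancel hq, div_one, rpow_one, one_div_div]
  rw [inv_mul_eq_div]

theorem mixedNormE_le_liminf [MeasurableAdd₂ E] [IsFiniteMeasure μ₁] {F : E → ℝ≥0∞}
    (hF : Measurable F) {s : ℕ → ℝ} {t : ℝ} (hs : Monotone s) (hs0 : ∀ n, 0 < s n)
    (hst : Tendsto s atTop (𝓝 t)) (ht : 0 < t) :
    mixedNormE t 1 μ₁ μ₂ F ≤ liminf (fun n => mixedNormE (s n) 1 μ₁ μ₂ F) atTop := by
  have hinner : ∀ y, Tendsto (fun n => (∫⁻ x, F (x + y) ^ s n ∂μ₁) ^ (1 / s n)) atTop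
      (𝓝 ((∫⁻ x, F (x + y) ^ t ∂μ₁) ^ (1 / t))) := fun y =>
    (tendsto_lintegral_rpow_of_monotone (hF.comp (measurable_add_const y)) hs
      (fun n => (hs0 n).le) hst ht).ennrpow (tendsto_const_nhds.div hst ht.ne') (by positivity)
  have hmeas : ∀ n, Measurable fun y => (∫⁻ x, F (x + y) ^ s n ∂μ₁) ^ (1 / s n) := fun n =>
    ((hF.comp measurable_add).pow_const _).lintegral_prod_left'.pow_const _
  simp only [mixedNormE, div_one, rpow_one]
  calc ∫⁻ y, (∫⁻ x, F (x + y) ^ t ∂μ₁) ^ (1 / t) ∂μ₂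
      = ∫⁻ y, liminf (fun n => (∫⁻ x, F (x + y) ^ s n ∂μ₁) ^ (1 / s n)) atTop ∂μ₂ :=
        lintegral_congr fun y => (hinner y).liminf_eq.symm
    _ ≤ _ := lintegral_liminf_le hmeas

end MixedNorm

theorem mixedNormE_exp_le_of_hypercontractive {E : Type*} [MeasurableSpace E] [Add E]
    [MeasurableAdd₂ E] {T : E → E} {γ π ρ : Measure E} [SFinite γ] [SFinite π]
    [IsProbabilityMeasure ρ] {κ r : ℝ} (hκ : 0 ≤ κ) (hr : 1 < r) {f : E → ℝ}
    (hint : ∀ᵐ w ∂mconv γ π, Integrable (fun z => f (T w + z)) ρ)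
    (hhyper : mixedNormE (1 + (r - 1) * κ) r γ π
        (fun x => ∫⁻ z, ENNReal.ofReal (Real.exp (f (T x + z) / r)) ∂ρ)
      ≤ (∫⁻ x, ENNReal.ofReal (Real.exp (f x / r) ^ r) ∂(mconv γ π)) ^ (1 / r)) :
    mixedNormE ((1 + (r - 1) * κ) / r) 1 γ π
        (fun w => ENNReal.ofReal (Real.exp (∫ z, f (T w + z) ∂ρ)))
      ≤ ∫⁻ x, ENNReal.ofReal (Real.exp (f x)) ∂(mconv γ π) := by
  have hr0 : 0 < r := one_pos.trans hr
  have hjensen : ∀ᵐ w ∂mconv γ π, ENNReal.ofReal (Real.exp (∫ z, f (T w + z) ∂ρ)) ^ r⁻¹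
      ≤ ∫⁻ z, ENNReal.ofReal (Real.exp (f (T w + z) / r)) ∂ρ := by
    filter_upwards [hint] with w hw
    rw [ofReal_rpow_of_pos (Real.exp_pos _), ← Real.exp_mul, ← div_eq_mul_inv,
      ← integral_div]
    exact ofReal_exp_integral_le_lintegral (hw.div_const r)
  have hexp_pow : ∀ x, Real.exp (f x / r) ^ r = Real.exp (f x) := fun x => by
    rw [← Real.exp_mul, div_mul_cancel₀ _ hr0.ne']
  simp only [hexp_pow] at hhyper
  calc _ = mixedNormE (1 + (r - 1) * κ) r γ π
          (fun w => ENNReal.ofReal (Real.exp (∫ z, f (T w + z) ∂ρ)) ^ r⁻¹) ^ r :=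
        (mixedNormE_rpow_inv _ hr0.ne' _).symm
    _ ≤ ((∫⁻ x, ENNReal.ofReal (Real.exp (f x)) ∂(mconv γ π)) ^ (1 / r)) ^ r :=
        rpow_le_rpow ((mixedNormE_mono_ae (by nlinarith) hr0.le hjensen).trans hhyper) hr0.le
    _ = _ := by rw [← rpow_mul, one_div_mul_cancel hr0.ne', rpow_one]

theorem monotone_tendsto_hypercontractive_exponent {κ : ℝ} (hκ : 1 ≤ κ) :
    Monotone (fun n : ℕ => (1 + ((n + 2 : ℝ) - 1) * κ) / (n + 2)) ∧
      Tendsto (fun n : ℕ => (1 + ((n + 2 : ℝ) - 1) * κ) / (n + 2)) atTop (𝓝 κ) := by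
  have heq : (fun n : ℕ => (1 + ((n + 2 : ℝ) - 1) * κ) / (n + 2))
      = fun n : ℕ => κ - (κ - 1) / (n + 2) := by
    ext n
    field_simp
    ring
  rw [heq]
  refine ⟨fun a b hab => ?_, ?_⟩
  · have : 0 ≤ κ - 1 := by linarith
    dsimp only
    gcongr
  · have hden : Tendsto (fun n : ℕ => (n + 2 : ℝ)) atTop atTop :=
      tendsto_natCast_atTop_atTop.atTop_add tendsto_const_nhds
    simpa using (tendsto_const_nhds (x := κ)).sub
      ((tendsto_const_nhds (x := κ - 1)).div_atTop hden)

theorem PT_weak_hypercontractivity_general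
    {E : Type*} [NormedAddCommGroup E]
    [TopologicalSpace.SeparableSpace E] [MeasurableSpace E] [BorelSpace E]
    (T : E → E) (hT : Measurable T)
    (γ π ρ : Measure E)
    [IsProbabilityMeasure γ] [IsProbabilityMeasure π] [IsProbabilityMeasure ρ]
    (hskew : mconv ((mconv γ π).map T) ρ = mconv γ π)
    (κ : ℝ) (hκ : 1 ≤ κ)
    (hhyper : ∀ r : ℝ, 1 < r → ∀ g : E → ℝ, Measurable g → (∀ x, 0 ≤ g x) →
      mixedNormE (1 + (r - 1) * κ) r γ π
          (fun x => ∫⁻ z, ENNReal.ofReal (g (T x + z)) ∂ρ)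
        ≤ (∫⁻ x, ENNReal.ofReal (g x ^ r) ∂(mconv γ π)) ^ (1 / r))
    (f : E → ℝ) (hf : Measurable f)
    (hfint : Integrable f (mconv γ π)) :
    ∫⁻ y, (∫⁻ x, ENNReal.ofReal
          (Real.exp (κ * ∫ z, f (T (x + y) + z) ∂ρ)) ∂γ) ^ (1 / κ) ∂π
      ≤ ∫⁻ z, ENNReal.ofReal (Real.exp (f z)) ∂(mconv γ π) := by
  have : SecondCountableTopology E := UniformSpace.secondCountable_of_separable E
  have hκ0 : 0 < κ := one_pos.trans_le hκ
  set V : E → ℝ≥0∞ := fun w => ENNReal.ofReal (Real.exp (∫ z, f (T w + z) ∂ρ))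
  have hV : Measurable V :=
    ((hf.comp ((hT.comp measurable_fst).add measurable_snd)).stronglyMeasurable
      |>.integral_prod_right').measurable.exp.ennreal_ofReal
  have : IsProbabilityMeasure ((mconv γ π).map T) :=
    Measure.isProbabilityMeasure_map hT.aemeasurable
  have hint : ∀ᵐ w ∂mconv γ π, Integrable (fun z => f (T w + z)) ρ :=
    ae_of_ae_map hT.aemeasurable (ae_integrable_add_of_integrable_mconv (by rwa [hskew]))
  have hr : ∀ n : ℕ, 1 < (n + 2 : ℝ) := fun n => by linarith [n.cast_nonneg (α := ℝ)]
  have hbound : ∀ n : ℕ, mixedNormE ((1 + ((n + 2 : ℝ) - 1) * κ) / (n + 2)) 1 γ π V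
      ≤ ∫⁻ z, ENNReal.ofReal (Real.exp (f z)) ∂(mconv γ π) := fun n =>
    mixedNormE_exp_le_of_hypercontractive hκ0.le (hr n) hint
      (hhyper _ (hr n) _ (hf.div_const _).exp fun _ => (Real.exp_pos _).le)
  have hpos : ∀ n : ℕ, 0 < (1 + ((n + 2 : ℝ) - 1) * κ) / (n + 2) := fun n =>
    div_pos (by nlinarith [hr n]) (by positivity)
  obtain ⟨hmono, hlim⟩ := monotone_tendsto_hypercontractive_exponent hκ
  have hlhs : ∫⁻ y, (∫⁻ x, ENNReal.ofReal
      (Real.exp (κ * ∫ z, f (T (x + y) + z) ∂ρ)) ∂γ) ^ (1 / κ) ∂π = mixedNormE κ 1 γ π V := by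
    simp only [mixedNormE, V, ofReal_rpow_of_pos (Real.exp_pos _), ← Real.exp_mul, mul_comm κ,
      div_one, rpow_one]
  rw [hlhs]
  exact (mixedNormE_le_liminf hV hmono hpos hlim hκ0).trans
    (liminf_le_of_frequently_le' (Frequently.of_forall hbound))

/-- Weak hypercontractivity: assuming the mixed-norm hypercontractivity estimates
`‖P_T g‖_{1+(r−1)κ, r} ≤ ‖g‖_{L^r(γ∗π)}` for all `r > 1` and nonnegative Borel `g`,
one gets `∫ (∫ e^{κ P_T f(x+y)} dγ(x))^{1/κ} dπ(y) ≤ ∫ e^f d(γ∗π)` for all Borel `f`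
with `f` and `e^f` integrable with respect to `γ ∗ π`. -/
theorem PT_weak_hypercontractivity
    {E : Type*} [NormedAddCommGroup E] [NormedSpace ℝ E] [CompleteSpace E]
    [TopologicalSpace.SeparableSpace E] [MeasurableSpace E] [BorelSpace E]
    (T : E → E) (hT : Measurable T)
    (γ π ρ : Measure E)
    [IsProbabilityMeasure γ] [IsProbabilityMeasure π] [IsProbabilityMeasure ρ]
    (hskew : mconv ((mconv γ π).map T) ρ = mconv γ π)
    (κ : ℝ) (hκ : 1 ≤ κ)
    (hhyper : ∀ r : ℝ, 1 < r → ∀ g : E → ℝ, Measurable g → (∀ x, 0 ≤ g x) →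
      mixedNormE (1 + (r - 1) * κ) r γ π
          (fun x => ∫⁻ z, ENNReal.ofReal (g (T x + z)) ∂ρ)
        ≤ (∫⁻ x, ENNReal.ofReal (g x ^ r) ∂(mconv γ π)) ^ (1 / r))
    (f : E → ℝ) (hf : Measurable f)
    (hfint : Integrable f (mconv γ π))
    (hefint : Integrable (fun x => Real.exp (f x)) (mconv γ π)) :
    ∫⁻ y, (∫⁻ x, ENNReal.ofReal
          (Real.exp (κ * ∫ z, f (T (x + y) + z) ∂ρ)) ∂γ) ^ (1 / κ) ∂π
      ≤ ∫⁻ z, ENNReal.ofReal (Real.exp (f z)) ∂(mconv γ π) :=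
  PT_weak_hypercontractivity_general T hT γ π ρ hskew κ hκ hhyper f hf hfint
end
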